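/- Let λ ∈ Γₙ (n ≥ 2), and for η ∈ ℝⁿ define the quadratic form Q(η) = -[Σ_{(i)} γ_{(i)}(Σ_p η_{i_p})]² + Σ_{(i)} γ_{(i)}[Σ_p η_{i_p}]² - Σ_{(i)} γ_{(i)} Σ_p η_{i_p}², where γ_{(i)} = λ_{i₁}⋯λ_{i_k}/σ_k(λ) and sums run over k-subsets. Then for all 2 ≤ k ≤ n-1 and all η ∈ ℝⁿ, Q(η) ≤ -(1/k)·[Σ_{(i)} γ_{(i)}(Σ_p η_{i_p})]² ≤ 0. -/

import Mathlib

/-!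
Put `φ(x) = σ_k(λ + x λη)`, a real polynomial of degree at most `k` with `φ(0) = σ_k(λ)`,
`φ'(0) = σ_k(λ) A` and `φ''(0) = σ_k(λ) (B - C)`, where `A = Σ γ (Σ_p η_p)` and `Q = -A² + B - C`.

`σ_k(z) ≠ 0` whenever every `z_i` lies in the open upper half-plane: up to `(n-k)!` it is the value
at `0` of the `(n-k)`-th derivative of `∏ (X + z_i)`, whose roots stay in the lower half-plane by
Gauss–Lucas. If `φ(r) = 0` with `Im r < 0`, homogeneity gives `σ_k(λη + λ r⁻¹) = 0` with
`Im (λ_i r⁻¹) > 0`; since `φ` is real, `φ` therefore has only real roots.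

Factor `φ = φ(0) ∏_{j ≤ m} (1 + b_j x)` with `m ≤ k`. Then `A = Σ b_j` and `B - C = A² - Σ b_j²`,
so the Cauchy–Schwarz inequality `A² ≤ k Σ b_j²` is exactly `k (B - C) ≤ (k - 1) A²`,
i.e. `Q ≤ -A² / k`.
-/

open Finset

/-- σ_k(λ): the k-th elementary symmetric polynomial. -/
def esymmFun (n k : ℕ) (lam : Fin n → ℝ) : ℝ :=
  ∑ t ∈ (univ : Finset (Fin n)).powersetCard k, ∏ i ∈ t, lam i

/-- γ_{(i)} = λ_{i₁}⋯λ_{i_k}/σ_k(λ) for a k-subset (i). -/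
noncomputable def gam (n k : ℕ) (lam : Fin n → ℝ) (t : Finset (Fin n)) : ℝ :=
  (∏ i ∈ t, lam i) / esymmFun n k lam

/-- The quadratic form Q(η) = -A + B - C, the second differential of
log σ_k at λ in rescaled direction λ·η. -/
noncomputable def Qform (n k : ℕ) (lam η : Fin n → ℝ) : ℝ :=
  -(∑ t ∈ (univ : Finset (Fin n)).powersetCard k,
      gam n k lam t * ∑ p ∈ t, η p) ^ 2 +
    ∑ t ∈ (univ : Finset (Fin n)).powersetCard k,
      gam n k lam t * (∑ p ∈ t, η p) ^ 2 -
    ∑ t ∈ (univ : Finset (Fin n)).powersetCard k,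
      gam n k lam t * ∑ p ∈ t, (η p) ^ 2

open Polynomial

namespace Polynomial

theorem rootSet_derivative_subset_of_convex {P : ℂ[X]} {K : Set ℂ} (hK : Convex ℝ K)
    (hP : P.rootSet ℂ ⊆ K) : P.derivative.rootSet ℂ ⊆ K := by
  rcases lt_or_ge 0 P.degree with hdeg | hdeg
  · exact (rootSet_derivative_subset_convexHull_rootSet hdeg).trans (convexHull_min hP hK)
  · simp [derivative_of_natDegree_zero (natDegree_eq_zero_iff_degree_le_zero.mpr hdeg)]

theorem rootSet_iterate_derivative_subset_of_convex {P : ℂ[X]} {K : Set ℂ} (hK : Convex ℝ K)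
    (hP : P.rootSet ℂ ⊆ K) (m : ℕ) : (derivative^[m] P).rootSet ℂ ⊆ K := by
  induction m with
  | zero => exact hP
  | succ m ih =>
    rw [Function.iterate_succ_apply']
    exact rootSet_derivative_subset_of_convex hK ih

theorem coeff_one_add_C_mul_X_mul_succ {R : Type*} [CommRing R] (a : R) (p : R[X]) (j : ℕ) :
    ((1 + C a * X) * p).coeff (j + 1) = p.coeff (j + 1) + a * p.coeff j := by
  simp [add_mul, mul_assoc, coeff_C_mul, coeff_X_mul]

end Polynomial

theorem Multiset.esymm_ne_zero_of_forall_im_pos {M : Multiset ℂ} (hM : ∀ z ∈ M, 0 < z.im)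
    {k : ℕ} (hk : k ≤ card M) : M.esymm k ≠ 0 := by
  set q : ℂ[X] := (M.map fun z => X + C z).prod
  have hcoeff : ∀ j ≤ card M, q.coeff j = M.esymm (card M - j) :=
    fun j hj => prod_X_add_C_coeff M hj
  have hroots : q.rootSet ℂ ⊆ {w | w.im < 0} := by
    intro w hw
    obtain ⟨-, hw⟩ := mem_rootSet.mp hw
    simp only [q, coe_aeval_eq_eval, eval_multiset_prod, Multiset.map_map, Function.comp_def,
      eval_add, eval_X, eval_C, Multiset.prod_eq_zero_iff, Multiset.mem_map] at hw
    obtain ⟨z, hz, hwz⟩ := hw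
    have := hM z hz
    simp only [Set.mem_ofPred_eq, eq_neg_of_add_eq_zero_left hwz, Complex.neg_im]
    linarith
  have hconvex : Convex ℝ {w : ℂ | w.im < 0} :=
    convex_halfSpace_lt Complex.imLm.isLinear 0
  set m := card M - k
  have hne : derivative^[m] q ≠ 0 := by
    intro h
    have := congrArg (coeff · k) h
    simp only [coeff_iterate_derivative, coeff_zero] at this
    rw [hcoeff _ (by omega), show card M - (k + m) = 0 by omega] at this
    simp [Multiset.esymm, Nat.descFactorial_eq_zero_iff_lt] at this
  intro hzero
  have h0 : (0 : ℂ) ∈ (derivative^[m] q).rootSet ℂ := by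
    rw [mem_rootSet, coe_aeval_eq_eval, ← coeff_zero_eq_eval_zero, coeff_iterate_derivative,
      zero_add, hcoeff _ (by omega), show card M - m = k by omega, hzero, smul_zero]
    exact ⟨hne, rfl⟩
  simpa using rootSet_iterate_derivative_subset_of_convex hconvex hroots m h0

namespace Multiset

variable {R ι : Type*}

theorem sq_sum_le_card_mul_sum_sq [Semiring R] [LinearOrder R] [IsStrictOrderedRing R]
    [ExistsAddOfLE R] (M : Multiset R) : M.sum ^ 2 ≤ card M * (M.map (· ^ 2)).sum := by
  have hsum : ∀ g : R → R, (M.map g).sum = ∑ x ∈ M.toEnumFinset, g x.1 := fun g => by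
    conv_lhs => rw [← map_toEnumFinset_fst M, Multiset.map_map]
    rfl
  have h := _root_.sq_sum_le_card_mul_sum_sq (s := M.toEnumFinset) (f := fun x => x.1)
  convert h using 2
  · simpa using hsum id
  · rw [card_toEnumFinset]
  · exact hsum _

variable [CommRing R] (s : Multiset ι) (f : ι → R)

theorem prod_one_add_C_mul_X_coeff_zero :
    (s.map fun i => 1 + C (f i) * X).prod.coeff 0 = 1 := by
  simp [coeff_zero_eq_eval_zero, eval_multiset_prod]

theorem prod_one_add_C_mul_X_coeff_one :
    (s.map fun i => 1 + C (f i) * X).prod.coeff 1 = (s.map f).sum := by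
  induction s using Multiset.induction with
  | empty => simp [coeff_one]
  | cons a s ih =>
    simp only [map_cons, prod_cons, sum_cons]
    rw [coeff_one_add_C_mul_X_mul_succ, ih, prod_one_add_C_mul_X_coeff_zero]
    ring

theorem two_mul_prod_one_add_C_mul_X_coeff_two :
    2 * (s.map fun i => 1 + C (f i) * X).prod.coeff 2 =
      (s.map f).sum ^ 2 - (s.map fun i => f i ^ 2).sum := by
  induction s using Multiset.induction with
  | empty => simp [coeff_one]
  | cons a s ih =>
    simp only [map_cons, prod_cons, sum_cons]
    rw [coeff_one_add_C_mul_X_mul_succ, prod_one_add_C_mul_X_coeff_one]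
    linear_combination ih

end Multiset

namespace Polynomial

variable {K : Type*} [Field K] {p : K[X]}

theorem Splits.eq_C_mul_prod_one_add_C_mul_X (hp : p.Splits) (h0 : p.coeff 0 ≠ 0) :
    p = C (p.leadingCoeff * (p.roots.map Neg.neg).prod) *
      (p.roots.map fun r => 1 + C (-r⁻¹) * X).prod := by
  have hroot_ne : ∀ r ∈ p.roots, r ≠ 0 := by
    rintro r hr rfl
    exact h0 (by rw [coeff_zero_eq_eval_zero]; exact (mem_roots'.mp hr).2)
  conv_lhs => rw [hp.eq_prod_roots]
  rw [map_mul, mul_assoc, map_multiset_prod, Multiset.map_map, ← Multiset.prod_map_mul]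
  congr 2
  refine Multiset.map_congr rfl fun r hr => ?_
  simp only [Function.comp_apply, map_neg, mul_add, mul_one, ← mul_assoc, ← C_mul,
    neg_mul_neg, mul_inv_cancel₀ (hroot_ne r hr), C_1, one_mul]
  ring

theorem Splits.two_mul_mul_coeff_zero_mul_coeff_two_le {p : ℝ[X]} (hp : p.Splits)
    (h0 : p.coeff 0 ≠ 0) {k : ℕ} (hk : p.natDegree ≤ k) :
    2 * k * (p.coeff 0 * p.coeff 2) ≤ (k - 1) * p.coeff 1 ^ 2 := by
  obtain ⟨c, R, b, hR, rfl⟩ : ∃ (c : ℝ) (R : Multiset ℝ) (b : ℝ → ℝ), Multiset.card R ≤ k ∧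
      p = C c * (R.map fun r => 1 + C (b r) * X).prod :=
    ⟨_, _, _, hp.natDegree_eq_card_roots ▸ hk, hp.eq_C_mul_prod_one_add_C_mul_X h0⟩
  have hCS : (R.map b).sum ^ 2 ≤ k * (R.map fun r => b r ^ 2).sum := by
    have hsq_nonneg : 0 ≤ (R.map fun r => b r ^ 2).sum :=
      Multiset.sum_nonneg fun x hx => by
        obtain ⟨r, -, rfl⟩ := Multiset.mem_map.mp hx
        positivity
    calc (R.map b).sum ^ 2
        ≤ Multiset.card R * (R.map fun r => b r ^ 2).sum := by
          simpa [Multiset.map_map, Function.comp_def] using (R.map b).sq_sum_le_card_mul_sum_sq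
      _ ≤ k * (R.map fun r => b r ^ 2).sum := by gcongr
  have h2 := R.two_mul_prod_one_add_C_mul_X_coeff_two b
  simp only [coeff_C_mul, R.prod_one_add_C_mul_X_coeff_zero, R.prod_one_add_C_mul_X_coeff_one]
  linear_combination (k * c ^ 2 : ℝ) * h2 + mul_le_mul_of_nonneg_left hCS (sq_nonneg c)

end Polynomial

section esymmLine

variable {ι : Type*} (s : Finset ι) (k : ℕ)

/-- `σ_k(λ + x • (λ * η))` as a polynomial in `x`. -/
noncomputable def esymmLine {R : Type*} [CommRing R] (lam η : ι → R) : R[X] :=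
  ∑ t ∈ s.powersetCard k, ∏ i ∈ t, C (lam i) * (1 + C (η i) * X)

variable {R : Type*} [CommRing R] (lam η : ι → R)

theorem esymmLine_eq_sum :
    esymmLine s k lam η = ∑ t ∈ s.powersetCard k,
      C (∏ i ∈ t, lam i) * (t.val.map fun i => 1 + C (η i) * X).prod := by
  simp only [esymmLine, prod_mul_distrib, map_prod]
  rfl

theorem esymmLine_coeff_zero :
    (esymmLine s k lam η).coeff 0 = ∑ t ∈ s.powersetCard k, ∏ i ∈ t, lam i := by
  simp only [esymmLine_eq_sum, finsetSum_coeff, coeff_C_mul,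
    Multiset.prod_one_add_C_mul_X_coeff_zero, mul_one]

theorem esymmLine_coeff_one :
    (esymmLine s k lam η).coeff 1 = ∑ t ∈ s.powersetCard k, (∏ i ∈ t, lam i) * ∑ p ∈ t, η p := by
  simp only [esymmLine_eq_sum, finsetSum_coeff, coeff_C_mul,
    Multiset.prod_one_add_C_mul_X_coeff_one]
  rfl

theorem two_mul_esymmLine_coeff_two :
    2 * (esymmLine s k lam η).coeff 2 = ∑ t ∈ s.powersetCard k,
      (∏ i ∈ t, lam i) * ((∑ p ∈ t, η p) ^ 2 - ∑ p ∈ t, η p ^ 2) := by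
  rw [esymmLine_eq_sum, finsetSum_coeff, mul_sum]
  refine sum_congr rfl fun t _ => ?_
  have h : 2 * (t.val.map fun i => 1 + C (η i) * X).prod.coeff 2 =
      (∑ p ∈ t, η p) ^ 2 - ∑ p ∈ t, η p ^ 2 :=
    Multiset.two_mul_prod_one_add_C_mul_X_coeff_two t.val η
  rw [coeff_C_mul, mul_left_comm, h]

theorem esymmLine_natDegree_le : (esymmLine s k lam η).natDegree ≤ k := by
  have hfactor : ∀ i, (C (lam i) * (1 + C (η i) * X)).natDegree ≤ 1 := fun i =>
    (natDegree_C_mul_le _ _).trans <| (natDegree_add_le _ _).trans <|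
      max_le (by simp) ((natDegree_C_mul_le _ _).trans natDegree_X_le)
  refine natDegree_sum_le_of_forall_le _ _ fun t ht => (natDegree_prod_le _ _).trans ?_
  calc ∑ i ∈ t, (C (lam i) * (1 + C (η i) * X)).natDegree
      ≤ ∑ i ∈ t, 1 := by gcongr with i; exact hfactor i
    _ = k := by simp [(mem_powersetCard.mp ht).2]

end esymmLine

section Hyperbolicity

variable {ι : Type*} {s : Finset ι} {k : ℕ} {lam : ι → ℝ}

theorem sum_powersetCard_prod_mul_one_add_mul_ne_zero (hk : k ≤ #s)
    (hlam : ∀ i ∈ s, 0 < lam i) (η : ι → ℝ) {r : ℂ} (hr : r.im < 0) :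
    ∑ t ∈ s.powersetCard k, ∏ i ∈ t, (lam i : ℂ) * (1 + η i * r) ≠ 0 := by
  have hr0 : r ≠ 0 := by rintro rfl; simp at hr
  set w : ι → ℂ := fun i => lam i * (η i + r⁻¹)
  have hinv : 0 < r⁻¹.im := by
    rw [Complex.inv_im]
    exact div_pos (neg_pos.mpr hr) (Complex.normSq_pos.mpr hr0)
  have hw : ∀ i ∈ s, 0 < (w i).im := fun i hi => by
    simpa [w] using mul_pos (hlam i hi) hinv
  have hterm : ∀ t ∈ s.powersetCard k, ∏ i ∈ t, (lam i : ℂ) * (1 + η i * r) =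
      r ^ k * ∏ i ∈ t, w i := fun t ht => by
    rw [← (mem_powersetCard.mp ht).2, ← prod_const, ← prod_mul_distrib]
    refine prod_congr rfl fun i _ => ?_
    simp only [w]
    field_simp
    ring
  rw [sum_congr rfl hterm, ← mul_sum, ← esymm_map_val]
  exact mul_ne_zero (pow_ne_zero _ hr0)
    (Multiset.esymm_ne_zero_of_forall_im_pos (by simpa using hw) (by simpa using hk))

theorem esymmLine_splits (hk : k ≤ #s) (hlam : ∀ i ∈ s, 0 < lam i) (η : ι → ℝ) :
    (esymmLine s k lam η).Splits := by
  refine Splits.of_splits_map (algebraMap ℝ ℂ) (IsAlgClosed.splits _) fun r hr => ?_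
  have heval : ∀ z : ℂ, ((esymmLine s k lam η).map (algebraMap ℝ ℂ)).eval z =
      ∑ t ∈ s.powersetCard k, ∏ i ∈ t, (lam i : ℂ) * (1 + η i * z) := fun z => by
    simp [esymmLine, eval_finsetSum, eval_prod, Polynomial.map_sum, Polynomial.map_prod]
  have hroot : ∑ t ∈ s.powersetCard k, ∏ i ∈ t, (lam i : ℂ) * (1 + η i * r) = 0 := by
    rw [← heval]
    exact (mem_roots'.mp hr).2
  have him : r.im = 0 := by
    rcases lt_trichotomy r.im 0 with h | h | h
    · exact absurd hroot (sum_powersetCard_prod_mul_one_add_mul_ne_zero hk hlam η h)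
    · exact h
    · refine absurd ?_ (sum_powersetCard_prod_mul_one_add_mul_ne_zero hk hlam η
        (r := (starRingEnd ℂ) r) (by simpa using h))
      simpa [map_sum, map_prod] using congrArg (starRingEnd ℂ) hroot
  exact ⟨r.re, Complex.ext (by simp) (by simp [him])⟩

end Hyperbolicity

theorem esymmFun_pos {n k : ℕ} (hk : k ≤ n) {lam : Fin n → ℝ} (hlam : ∀ i, 0 < lam i) :
    0 < esymmFun n k lam :=
  sum_pos (fun t _ => prod_pos fun i _ => hlam i) (powersetCard_nonempty.mpr (by simpa using hk))

theorem sum_gam_mul (n k : ℕ) (lam : Fin n → ℝ) (x : Finset (Fin n) → ℝ) :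
    ∑ t ∈ (univ : Finset (Fin n)).powersetCard k, gam n k lam t * x t =
      (∑ t ∈ (univ : Finset (Fin n)).powersetCard k, (∏ i ∈ t, lam i) * x t) /
        esymmFun n k lam := by
  simp only [gam, sum_div, div_mul_eq_mul_div]

theorem stmt15_general (n k : ℕ) (hk2 : 2 ≤ k) (hkn : k ≤ n - 1)
    (lam : Fin n → ℝ) (hlam : ∀ i, 0 < lam i) (η : Fin n → ℝ) :
    Qform n k lam η ≤
      -(1 / k) * (∑ t ∈ (univ : Finset (Fin n)).powersetCard k,
        gam n k lam t * ∑ p ∈ t, η p) ^ 2 ∧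
    -(1 / k : ℝ) * (∑ t ∈ (univ : Finset (Fin n)).powersetCard k,
        gam n k lam t * ∑ p ∈ t, η p) ^ 2 ≤ 0 := by
  have hk : k ≤ #(univ : Finset (Fin n)) := by rw [card_univ, Fintype.card_fin]; omega
  set φ := esymmLine univ k lam η
  have hS : 0 < φ.coeff 0 := esymmLine_coeff_zero univ k lam η ▸ esymmFun_pos (by omega) hlam
  have hnewton := (esymmLine_splits hk (fun i _ => hlam i) η)
    |>.two_mul_mul_coeff_zero_mul_coeff_two_le hS.ne' (esymmLine_natDegree_le univ k lam η)
  have hA : ∑ t ∈ (univ : Finset (Fin n)).powersetCard k, gam n k lam t * ∑ p ∈ t, η p =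
      φ.coeff 1 / φ.coeff 0 := by
    rw [sum_gam_mul, esymmLine_coeff_one, esymmLine_coeff_zero]; rfl
  have hQ : Qform n k lam η = -(φ.coeff 1 / φ.coeff 0) ^ 2 + 2 * φ.coeff 2 / φ.coeff 0 := by
    rw [Qform, hA, add_sub_assoc, ← sum_sub_distrib, two_mul_esymmLine_coeff_two,
      esymmLine_coeff_zero]
    simp only [← mul_sub, sum_gam_mul]
    rfl
  rw [hQ, hA]
  have hk0 : (0 : ℝ) < k := by exact_mod_cast (by omega : 0 < k)
  refine ⟨?_, mul_nonpos_of_nonpos_of_nonneg (neg_nonpos.mpr (by positivity)) (sq_nonneg _)⟩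
  rw [div_pow, ← sub_nonneg]
  field_simp
  linarith

/-- For 2 ≤ k ≤ n-1 and λ in the positive cone,
Q(η) ≤ -(1/k)·[Σ γ(Σ_p η_{i_p})]² ≤ 0. -/
theorem stmt15 (n k : ℕ) (hn : 2 ≤ n) (hk2 : 2 ≤ k) (hkn : k ≤ n - 1)
    (lam : Fin n → ℝ) (hlam : ∀ i, 0 < lam i) (η : Fin n → ℝ) :
    Qform n k lam η ≤
      -(1 / k) * (∑ t ∈ (univ : Finset (Fin n)).powersetCard k,
        gam n k lam t * ∑ p ∈ t, η p) ^ 2 ∧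
    -(1 / k : ℝ) * (∑ t ∈ (univ : Finset (Fin n)).powersetCard k,
        gam n k lam t * ∑ p ∈ t, η p) ^ 2 ≤ 0 :=
  stmt15_general n k hk2 hkn lam hlam η
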